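/- Let Γ be a discrete abelian group and let N = p_1^{n_1}⋯p_k^{n_k} where p_1, …, p_k are distinct primes and n_i ≥ 1. A subset E ⊆ Γ is N-PR if and only if for every i with 1 ≤ i ≤ k, the quotient map π_{p_i^{n_i}} is injective on E and π_{p_i^{n_i}}(E) is p_i-PR in Γ/Γ_{p_i^{n_i}}. -/

import Mathlib

open scoped DirectSum

/-- A subset `E` of a discrete abelian group `Γ` is `N`-PR (`N`-pseudo-Rademacher) if every
function `φ : E → 𝕋` taking values in the `N`-th roots of unity is the restriction of a
character of `Γ`. -/
def IsNPR {Γ : Type*} [CommGroup Γ] (N : ℕ) (E : Set Γ) : Prop :=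
  ∀ φ : Γ → Circle, (∀ γ ∈ E, φ γ ^ N = 1) →
    ∃ χ : Γ →* Circle, ∀ γ ∈ E, χ γ = φ γ

/-- `Γ_{p^n}`: the subgroup of elements of finite order whose order is not divisible
by `p ^ n`. -/
def notDvdOrderSubgroup (Γ : Type*) [CommGroup Γ] (p : ℕ) (hp : p.Prime) (n : ℕ)
    (hn : n ≠ 0) : Subgroup Γ where
  carrier := {γ | IsOfFinOrder γ ∧ ¬ (p ^ n ∣ orderOf γ)}
  one_mem' := by
    refine ⟨IsOfFinOrder.one, fun h => ?_⟩
    rw [orderOf_one, Nat.dvd_one, pow_eq_one_iff, or_iff_left hn] at h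
    exact hp.one_lt.ne' h
  inv_mem' := by
    rintro a ⟨h1, h2⟩
    exact ⟨h1.inv, by simpa [orderOf_inv] using h2⟩
  mul_mem' := by
    rintro a b ⟨ha1, ha2⟩ ⟨hb1, hb2⟩
    have hcom : Commute a b := mul_comm a b
    refine ⟨hcom.isOfFinOrder_mul ha1 hb1, fun hdvd => ?_⟩
    have hdvd' : p ^ n ∣ Nat.lcm (orderOf a) (orderOf b) :=
      hdvd.trans hcom.orderOf_mul_dvd_lcm
    have ha0 : orderOf a ≠ 0 := (orderOf_pos_iff.mpr ha1).ne'
    have hb0 : orderOf b ≠ 0 := (orderOf_pos_iff.mpr hb1).ne'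
    have hl0 : Nat.lcm (orderOf a) (orderOf b) ≠ 0 := Nat.lcm_ne_zero ha0 hb0
    rw [hp.pow_dvd_iff_le_factorization hl0, Nat.factorization_lcm ha0 hb0,
      Finsupp.sup_apply, le_sup_iff] at hdvd'
    rcases hdvd' with h | h
    · exact ha2 ((hp.pow_dvd_iff_le_factorization ha0).mpr h)
    · exact hb2 ((hp.pow_dvd_iff_le_factorization hb0).mpr h)

/-! ### Auxiliary lemmas -/

/-- The circle has elements of any given finite order: `ζ ^ a = 1 ↔ n ∣ a`. -/
lemma NPRaux.exists_zeta (n : ℕ) (hn : n ≠ 0) :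
    ∃ ζ : Circle, ∀ a : ℤ, ζ ^ a = 1 ↔ (n : ℤ) ∣ a := by
  haveI : NeZero n := ⟨hn⟩
  refine ⟨ZMod.toCircle (1 : ZMod n), fun a => ?_⟩
  have h1 : (ZMod.toCircle (1 : ZMod n)) ^ a = ZMod.toCircle ((a : ZMod n)) := by
    rw [← AddChar.map_zsmul_eq_zpow]; congr 1; simp
  have h2 : ZMod.toCircle ((a : ZMod n)) = 1 ↔ ((a : ZMod n)) = 0 := by
    constructor
    · intro h; apply ZMod.injective_toCircle; rw [h, AddChar.map_zero_eq_one]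
    · intro h; rw [h, AddChar.map_zero_eq_one]
  rw [h1, h2, ZMod.intCast_zmod_eq_zero_iff_dvd]

/-- The circle is a divisible group. -/
noncomputable instance : DivisibleBy (Additive Circle) ℤ :=
  (Function.Surjective.divisibleBy (f := fun r : ℝ => Additive.ofMul (Circle.exp r))
    (fun z => ⟨Complex.arg z.toMul, congrArg Additive.ofMul (Circle.exp_arg z.toMul)⟩)
    (fun a n => congrArg Additive.ofMul (by
      show Circle.exp (n • a) = (Circle.exp a) ^ n
      rw [← Additive.ofMul.injective.eq_iff]
      exact Circle.expHom.map_zsmul n a)))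

/-- If all trivial product relations among elements of `E` have trivial `f`-products, then
`f` extends from `E` to a character of `G`. Uses divisibility of the circle. -/
lemma NPRaux.exists_char_of_indep {G : Type*} [CommGroup G] (E : Set G) (f : G → Circle)
    (h : ∀ a : G →₀ ℤ, ↑a.support ⊆ E → (a.prod fun γ z => γ ^ z) = 1 →
      (a.prod fun γ z => f γ ^ z) = 1) :
    ∃ χ : G →* Circle, ∀ γ ∈ E, χ γ = f γ := by
  classical
  set M := (↥E →₀ ℤ)
  set Φ : M →+ Additive G :=
    Finsupp.liftAddHom (fun e => zmultiplesHom (Additive G) (Additive.ofMul (e : G))) with hΦ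
  set Ψ : M →+ Additive Circle :=
    Finsupp.liftAddHom (fun e => zmultiplesHom (Additive Circle) (Additive.ofMul (f e))) with hΨ
  have key : ∀ x : M, Φ x = 0 → Ψ x = 0 := by
    intro x hx
    set a : G →₀ ℤ := Finsupp.mapDomain Subtype.val x with ha
    have hsupp : ↑a.support ⊆ E := by
      intro γ hγ
      have hss := Finsupp.mapDomain_support_of_injective Subtype.val_injective x ▸ hγ
      simp only [Finset.coe_image, Set.mem_image] at hss
      rcases hss with ⟨e, _, rfl⟩
      exact e.2
    have hΦx : Additive.toMul (Φ x) = x.prod fun e z => (e : G) ^ z := by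
      rw [hΦ, Finsupp.liftAddHom_apply, Finsupp.sum, Finsupp.prod, toMul_sum]; rfl
    have hΨx : Additive.toMul (Ψ x) = x.prod fun e z => (f e) ^ z := by
      rw [hΨ, Finsupp.liftAddHom_apply, Finsupp.sum, Finsupp.prod, toMul_sum]; rfl
    have hprod : (a.prod fun γ z => γ ^ z) = x.prod fun e z => (e : G) ^ z :=
      Finsupp.prod_mapDomain_index_inj Subtype.val_injective
    have hprod2 : (a.prod fun γ z => f γ ^ z) = x.prod fun e z => (f e) ^ z :=
      Finsupp.prod_mapDomain_index_inj Subtype.val_injective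
    have h1 : (a.prod fun γ z => γ ^ z) = 1 := by rw [hprod, ← hΦx, hx]; rfl
    have h2 := h a hsupp h1
    rw [hprod2] at h2
    rw [← toMul_zero (α := Circle)] at h2
    apply Additive.toMul.injective
    rw [hΨx, ← h2]
  let lift1 : M ⧸ Φ.ker →+ Additive G := QuotientAddGroup.kerLift Φ
  have hinj : Function.Injective lift1 := QuotientAddGroup.kerLift_injective Φ
  let lift2 : M ⧸ Φ.ker →+ Additive Circle :=
    QuotientAddGroup.lift Φ.ker Ψ (fun x hx => key x hx)
  have baer : Module.Baer ℤ (Additive Circle) := Module.Baer.of_divisible _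
  obtain ⟨g, hg⟩ := baer.extension_property_addMonoidHom lift1 hinj lift2
  refine ⟨MonoidHom.toAdditive.symm g, fun γ hγ => ?_⟩
  have hx : lift1 (QuotientAddGroup.mk (Finsupp.single (⟨γ, hγ⟩ : ↥E) (1 : ℤ))) =
      Additive.ofMul γ := by
    show Φ (Finsupp.single (⟨γ, hγ⟩ : ↥E) (1 : ℤ)) = Additive.ofMul γ
    rw [hΦ, Finsupp.liftAddHom_apply_single]; simp
  have hy : lift2 (QuotientAddGroup.mk (Finsupp.single (⟨γ, hγ⟩ : ↥E) (1 : ℤ))) =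
      Additive.ofMul (f γ) := by
    show Ψ (Finsupp.single (⟨γ, hγ⟩ : ↥E) (1 : ℤ)) = Additive.ofMul (f γ)
    rw [hΨ, Finsupp.liftAddHom_apply_single]; simp
  have hgg := DFunLike.congr_fun hg
      (QuotientAddGroup.mk (Finsupp.single (⟨γ, hγ⟩ : ↥E) (1 : ℤ)))
  simp only [AddMonoidHom.coe_comp, Function.comp_apply] at hgg
  rw [hx, hy] at hgg
  show Additive.toMul (g (Additive.ofMul γ)) = f γ
  rw [hgg]; rfl

namespace NPRaux

variable {Γ : Type*} [CommGroup Γ]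

/-- From `N`-PR: relations that land on elements of finite order with order not divisible by
`q ^ m` have all exponents divisible by `q`. -/
lemma indep_of_isNPR {N q m : ℕ} (hq : q.Prime) (hqm : q ^ m ∣ N)
    {E : Set Γ} (hE : IsNPR N E) (a : Γ →₀ ℤ) (hsupp : ↑a.support ⊆ E)
    {δ : Γ} (hδ : δ = a.prod fun γ z => γ ^ z) (hfin : IsOfFinOrder δ)
    (hndvd : ¬ (q ^ m ∣ orderOf δ)) (γ₀ : Γ) :
    (q : ℤ) ∣ a γ₀ := by
  classical
  by_cases h0 : a γ₀ = 0
  · simp [h0]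
  have hγ₀E : γ₀ ∈ E := hsupp (Finsupp.mem_support_iff.mpr h0)
  obtain ⟨ζ, hζ⟩ := exists_zeta (q ^ m) (pow_ne_zero m hq.ne_zero)
  set φ : Γ → Circle := fun γ => if γ = γ₀ then ζ else 1 with hφdef
  have hφ : ∀ γ ∈ E, φ γ ^ N = 1 := by
    intro γ _
    by_cases hγ : γ = γ₀
    · simp only [hφdef, hγ, if_pos rfl]
      have : ζ ^ (N : ℤ) = 1 := (hζ N).mpr (Int.natCast_dvd_natCast.mpr hqm)
      rwa [zpow_natCast] at this
    · simp [hφdef, hγ]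
  obtain ⟨χ, hχ⟩ := hE φ hφ
  set d := orderOf δ with hd
  have hχδ : χ δ = ζ ^ a γ₀ := by
    rw [hδ, map_finsuppProd]
    rw [Finsupp.prod_congr (g2 := fun γ _ => if γ = γ₀ then ζ ^ a γ₀ else 1)
      (fun γ hγ => ?_), Finsupp.prod_ite_eq', if_pos (Finsupp.mem_support_iff.mpr h0)]
    rw [map_zpow, hχ γ (hsupp hγ)]
    by_cases hγ' : γ = γ₀
    · subst hγ'; simp [hφdef]
    · simp [hφdef, hγ']
  have hone : ζ ^ (a γ₀ * d) = 1 := by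
    rw [zpow_mul, ← hχδ, zpow_natCast, ← map_pow, pow_orderOf_eq_one, map_one]
  have hdvd : ((q ^ m : ℕ) : ℤ) ∣ a γ₀ * d := (hζ _).mp hone
  by_contra hqa
  have hA : ¬ q ∣ (a γ₀).natAbs := by
    intro hc
    exact hqa (Int.natAbs_dvd_natAbs.mp (by simpa using hc) : (q : ℤ) ∣ a γ₀)
  have hnat : q ^ m ∣ (a γ₀).natAbs * d := by
    have := Int.natAbs_dvd_natAbs.mpr hdvd
    simpa [Int.natAbs_mul, Int.natAbs_pow] using this
  have cop : Nat.Coprime (q ^ m) (a γ₀).natAbs :=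
    Nat.Coprime.pow_left m ((hq.coprime_iff_not_dvd).mpr hA)
  exact hndvd (cop.dvd_of_dvd_mul_left hnat)

section PerPrime

variable {q m : ℕ} (hq : q.Prime) (hm : m ≠ 0) {E : Set Γ}

lemma mk'_eq_one_iff {δ : Γ} :
    QuotientGroup.mk' (notDvdOrderSubgroup Γ q hq m hm) δ = 1 ↔
      δ ∈ notDvdOrderSubgroup Γ q hq m hm := by
  rw [← MonoidHom.mem_ker, QuotientGroup.ker_mk']

/-- Forward direction, injectivity. -/
lemma injOn_of_isNPR {N : ℕ} (hqm : q ^ m ∣ N) (hE : IsNPR N E) :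
    Set.InjOn (QuotientGroup.mk' (notDvdOrderSubgroup Γ q hq m hm)) E := by
  classical
  intro γ hγ γ' hγ' heq
  by_contra hne
  have hmem : γ⁻¹ * γ' ∈ notDvdOrderSubgroup Γ q hq m hm := by
    rw [← mk'_eq_one_iff hq hm]
    rw [map_mul, map_inv, heq]
    simp
  set a : Γ →₀ ℤ := Finsupp.single γ (-1) + Finsupp.single γ' 1 with hadef
  have hsupp : ↑a.support ⊆ E := by
    intro x hx
    have := Finsupp.support_add hx
    simp only [Finset.mem_union, Finsupp.support_single_ne_zero _ (by norm_num : (-1 : ℤ) ≠ 0),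
      Finsupp.support_single_ne_zero _ (by norm_num : (1 : ℤ) ≠ 0), Finset.mem_singleton] at this
    rcases this with rfl | rfl
    · exact hγ
    · exact hγ'
  have hprod : (a.prod fun x z => x ^ z) = γ⁻¹ * γ' := by
    rw [hadef, Finsupp.prod_add_index' (fun x => zpow_zero x) (fun x z w => zpow_add x z w),
      Finsupp.prod_single_index (zpow_zero γ), Finsupp.prod_single_index (zpow_zero γ')]
    simp
  have hdvd := indep_of_isNPR hq hqm hE a hsupp hprod.symm hmem.1 hmem.2 γ'
  have haγ' : a γ' = 1 := by
    rw [hadef]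
    simp [Finsupp.single_apply, hne]
  rw [haγ'] at hdvd
  have h1 := Int.le_of_dvd one_pos hdvd
  have h2 := hq.two_le
  omega

/-- Forward direction, the image is `q`-PR. -/
lemma image_isNPR_of_isNPR {N : ℕ} (hqm : q ^ m ∣ N) (hE : IsNPR N E) :
    IsNPR q ((QuotientGroup.mk' (notDvdOrderSubgroup Γ q hq m hm)) '' E) := by
  classical
  set π := QuotientGroup.mk' (notDvdOrderSubgroup Γ q hq m hm) with hπ
  intro ψ hψ
  apply exists_char_of_indep (π '' E) ψ
  intro b hbs hb1
  have hex : ∀ x : Γ ⧸ (notDvdOrderSubgroup Γ q hq m hm),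
      ∃ γ : Γ, π γ = x ∧ (x ∈ π '' E → γ ∈ E) := by
    intro x
    by_cases h : x ∈ π '' E
    · obtain ⟨γ, hγE, hγx⟩ := h
      exact ⟨γ, hγx, fun _ => hγE⟩
    · refine ⟨Quotient.out x, ?_, fun hx => absurd hx h⟩
      exact QuotientGroup.out_eq' x
  choose sec hsec1 hsec2 using hex
  have hsecinj : Function.Injective sec := fun x y h => by
    rw [← hsec1 x, ← hsec1 y, h]
  set a : Γ →₀ ℤ := Finsupp.mapDomain sec b with ha
  have hasupp : ↑a.support ⊆ E := by
    intro γ hγ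
    have hss := Finsupp.mapDomain_support_of_injective hsecinj b ▸ hγ
    simp only [Finset.coe_image, Set.mem_image, Finset.mem_coe] at hss
    rcases hss with ⟨x, hx, rfl⟩
    exact hsec2 x (hbs hx)
  set δ := a.prod fun γ z => γ ^ z with hδ
  have hπδ : π δ = 1 := by
    rw [hδ, map_finsuppProd]
    have e1 : (a.prod fun γ z => π (γ ^ z)) = a.prod fun γ z => (π γ) ^ z :=
      Finsupp.prod_congr fun γ _ => map_zpow π γ _
    have e2 : (a.prod fun γ z => (π γ) ^ z) = b.prod fun x z => (π (sec x)) ^ z := by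
      rw [ha]; exact Finsupp.prod_mapDomain_index_inj hsecinj
    have e3 : (b.prod fun x z => (π (sec x)) ^ z) = b.prod fun x z => x ^ z :=
      Finsupp.prod_congr fun x _ => by rw [hsec1 x]
    rw [e1, e2, e3, hb1]
  have hmem : δ ∈ notDvdOrderSubgroup Γ q hq m hm := (mk'_eq_one_iff hq hm).mp hπδ
  have hdvd : ∀ x ∈ b.support, (q : ℤ) ∣ b x := by
    intro x hx
    have := indep_of_isNPR hq hqm hE a hasupp hδ hmem.1 hmem.2 (sec x)
    rwa [ha, Finsupp.mapDomain_apply hsecinj] at this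
  rw [Finsupp.prod]
  apply Finset.prod_eq_one
  intro x hx
  obtain ⟨c, hc⟩ := hdvd x hx
  rw [hc, zpow_mul, zpow_natCast]
  rw [hψ x (hbs hx)]
  exact one_zpow c

/-- Backward direction: independence mod `Γ_{q^m}` from injectivity plus `q`-PR of the image. -/
lemma indep_of_image
    (hinj : Set.InjOn (QuotientGroup.mk' (notDvdOrderSubgroup Γ q hq m hm)) E)
    (hq1 : IsNPR q ((QuotientGroup.mk' (notDvdOrderSubgroup Γ q hq m hm)) '' E))
    (a : Γ →₀ ℤ) (hsupp : ↑a.support ⊆ E)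
    (hmem : (a.prod fun γ z => γ ^ z) ∈ notDvdOrderSubgroup Γ q hq m hm) (γ₀ : Γ) :
    (q : ℤ) ∣ a γ₀ := by
  classical
  set π := QuotientGroup.mk' (notDvdOrderSubgroup Γ q hq m hm) with hπ
  by_cases h0 : a γ₀ = 0
  · simp [h0]
  have hγ₀E : γ₀ ∈ E := hsupp (Finsupp.mem_support_iff.mpr h0)
  obtain ⟨ζ, hζ⟩ := exists_zeta q hq.ne_zero
  set ψ : Γ ⧸ (notDvdOrderSubgroup Γ q hq m hm) → Circle :=
    fun x => if x = π γ₀ then ζ else 1 with hψdef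
  have hψ : ∀ x ∈ π '' E, ψ x ^ q = 1 := by
    intro x _
    by_cases hx : x = π γ₀
    · simp only [hψdef, hx, if_pos rfl]
      have : ζ ^ (q : ℤ) = 1 := (hζ q).mpr dvd_rfl
      rwa [zpow_natCast] at this
    · simp [hψdef, hx]
  obtain ⟨χ, hχ⟩ := hq1 ψ hψ
  set δ := a.prod fun γ z => γ ^ z with hδ
  have hπδ : π δ = 1 := (mk'_eq_one_iff hq hm).mpr hmem
  have hval : χ (π δ) = ζ ^ a γ₀ := by
    rw [hδ, map_finsuppProd, map_finsuppProd]
    rw [Finsupp.prod_congr (g2 := fun γ _ => if γ = γ₀ then ζ ^ a γ₀ else 1)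
      (fun γ hγ => ?_), Finsupp.prod_ite_eq', if_pos (Finsupp.mem_support_iff.mpr h0)]
    have hγE : γ ∈ E := hsupp hγ
    rw [map_zpow, map_zpow, hχ (π γ) (Set.mem_image_of_mem _ hγE)]
    by_cases hγ' : γ = γ₀
    · subst hγ'; simp [hψdef]
    · have : π γ ≠ π γ₀ := fun hc => hγ' (hinj hγE hγ₀E hc)
      simp [hψdef, this, hγ']
  rw [hπδ, map_one] at hval
  exact (hζ _).mp hval.symm

/-- Backward direction: relations that are trivial have exponents divisible by `q ^ m`. -/
lemma indep_pow_of_image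
    (hinj : Set.InjOn (QuotientGroup.mk' (notDvdOrderSubgroup Γ q hq m hm)) E)
    (hq1 : IsNPR q ((QuotientGroup.mk' (notDvdOrderSubgroup Γ q hq m hm)) '' E))
    (a : Γ →₀ ℤ) (hsupp : ↑a.support ⊆ E)
    (hprod : (a.prod fun γ z => γ ^ z) = 1) (γ₀ : Γ) :
    ((q : ℤ) ^ m) ∣ a γ₀ := by
  classical
  suffices hclaim : ∀ j, j ≤ m → ∀ γ₀, ((q : ℤ) ^ j) ∣ a γ₀ from hclaim m le_rfl γ₀
  intro j
  induction j with
  | zero => intro _ γ₀; simp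
  | succ j ih =>
    intro hjm γ₀
    have ihj : ∀ γ, ((q : ℤ) ^ j) ∣ a γ := ih (by omega)
    set c : Γ →₀ ℤ := a.mapRange (fun z => z / (q : ℤ) ^ j) (by simp) with hc
    have hca : ∀ γ, (q : ℤ) ^ j * c γ = a γ := by
      intro γ
      rw [hc, Finsupp.mapRange_apply]
      exact Int.mul_ediv_cancel' (ihj γ)
    have hcsupp : c.support ⊆ a.support := Finsupp.support_mapRange
    set δ := c.prod fun γ z => γ ^ z with hδ
    have hδpow : δ ^ (q ^ j) = 1 := by
      have e1 : δ ^ (q ^ j) = ∏ γ ∈ c.support, γ ^ a γ := by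
        rw [hδ, Finsupp.prod, ← Finset.prod_pow]
        apply Finset.prod_congr rfl
        intro γ _
        rw [← zpow_natCast (γ ^ c γ) (q ^ j), ← zpow_mul, mul_comm]
        rw [show ((q ^ j : ℕ) : ℤ) = (q : ℤ) ^ j by push_cast; ring, hca]
      have e2 : ∏ γ ∈ c.support, γ ^ a γ = ∏ γ ∈ a.support, γ ^ a γ := by
        refine Finset.prod_subset hcsupp (fun γ _ hγ => ?_)
        have hc0 : c γ = 0 := Finsupp.notMem_support_iff.mp hγ
        have h0 : a γ = 0 := by rw [← hca γ, hc0, mul_zero]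
        rw [h0, zpow_zero]
      rw [e1, e2, ← Finsupp.prod, hprod]
    have hfin : IsOfFinOrder δ :=
      isOfFinOrder_iff_pow_eq_one.mpr ⟨q ^ j, pow_pos hq.pos j, hδpow⟩
    have hord : orderOf δ ∣ q ^ j := orderOf_dvd_of_pow_eq_one hδpow
    have hndvd : ¬ q ^ m ∣ orderOf δ := by
      intro hdd
      have h1 : q ^ m ∣ q ^ j := hdd.trans hord
      have h2 := (Nat.pow_dvd_pow_iff_le_right hq.one_lt).mp h1
      omega
    have hmemδ : δ ∈ notDvdOrderSubgroup Γ q hq m hm := ⟨hfin, hndvd⟩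
    have hqc := indep_of_image hq hm hinj hq1 c
      (fun x hx => hsupp (hcsupp hx)) hmemδ γ₀
    obtain ⟨e, he⟩ := hqc
    refine ⟨e, ?_⟩
    rw [pow_succ, ← hca γ₀, he]
    ring


/-- Backward direction: `E` is `q ^ m`-PR. -/
lemma isNPR_pow_of_image
    (hinj : Set.InjOn (QuotientGroup.mk' (notDvdOrderSubgroup Γ q hq m hm)) E)
    (hq1 : IsNPR q ((QuotientGroup.mk' (notDvdOrderSubgroup Γ q hq m hm)) '' E)) :
    IsNPR (q ^ m) E := by
  intro φ hφ
  apply exists_char_of_indep E φ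
  intro a hsupp hprod
  rw [Finsupp.prod]
  apply Finset.prod_eq_one
  intro γ hγ
  obtain ⟨e, he⟩ := indep_pow_of_image hq hm hinj hq1 a hsupp hprod γ
  rw [he, zpow_mul]
  rw [show ((q : ℤ) ^ m) = ((q ^ m : ℕ) : ℤ) by push_cast; ring, zpow_natCast]
  rw [hφ γ (hsupp hγ), one_zpow]

end PerPrime

lemma isNPR_one {E : Set Γ} : IsNPR 1 E := by
  intro φ hφ
  refine ⟨1, fun γ hγ => ?_⟩
  have := hφ γ hγ
  rw [pow_one] at this
  rw [MonoidHom.one_apply, this]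

lemma isNPR_mul {a b : ℕ} (hab : Nat.Coprime a b) {E : Set Γ}
    (ha : IsNPR a E) (hb : IsNPR b E) : IsNPR (a * b) E := by
  intro φ hφ
  set x := Nat.gcdA a b with hx
  set y := Nat.gcdB a b with hy
  have h1 : (1 : ℤ) = a * x + b * y := by
    have h := Nat.gcd_eq_gcd_ab a b
    rw [Nat.Coprime.gcd_eq_one hab] at h
    simpa using h
  have key : ∀ γ ∈ E, (φ γ) ^ ((a * b : ℕ) : ℤ) = 1 := by
    intro γ hγ
    rw [zpow_natCast]
    exact hφ γ hγ
  have hφ₁ : ∀ γ ∈ E, (φ γ ^ ((b : ℤ) * y)) ^ a = 1 := by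
    intro γ hγ
    rw [← zpow_natCast _ a, ← zpow_mul,
      show (b : ℤ) * y * a = ((a * b : ℕ) : ℤ) * y by push_cast; ring,
      zpow_mul, key γ hγ, one_zpow]
  have hφ₂ : ∀ γ ∈ E, (φ γ ^ ((a : ℤ) * x)) ^ b = 1 := by
    intro γ hγ
    rw [← zpow_natCast _ b, ← zpow_mul,
      show (a : ℤ) * x * b = ((a * b : ℕ) : ℤ) * x by push_cast; ring,
      zpow_mul, key γ hγ, one_zpow]
  obtain ⟨χ₁, hχ₁⟩ := ha (fun γ => φ γ ^ ((b : ℤ) * y)) hφ₁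
  obtain ⟨χ₂, hχ₂⟩ := hb (fun γ => φ γ ^ ((a : ℤ) * x)) hφ₂
  refine ⟨χ₁ * χ₂, fun γ hγ => ?_⟩
  rw [MonoidHom.mul_apply, hχ₁ γ hγ, hχ₂ γ hγ, ← zpow_add,
    show (b : ℤ) * y + (a : ℤ) * x = 1 by omega, zpow_one]

lemma isNPR_prod {ι : Type*} (s : Finset ι) (f : ι → ℕ) {E : Set Γ}
    (hcop : ∀ i ∈ s, ∀ j ∈ s, i ≠ j → Nat.Coprime (f i) (f j))
    (h : ∀ i ∈ s, IsNPR (f i) E) : IsNPR (∏ i ∈ s, f i) E := by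
  classical
  induction s using Finset.induction_on with
  | empty => rw [Finset.prod_empty]; exact isNPR_one
  | @insert i s his ih =>
    rw [Finset.prod_insert his]
    have hcop' : Nat.Coprime (f i) (∏ j ∈ s, f j) :=
      Nat.Coprime.prod_right (fun j hj =>
        hcop i (Finset.mem_insert_self i s) j (Finset.mem_insert_of_mem hj)
          (fun hc => his (hc ▸ hj)))
    exact isNPR_mul hcop' (h i (Finset.mem_insert_self i s))
      (ih (fun i' hi' j' hj' hij => hcop i' (Finset.mem_insert_of_mem hi') j'
        (Finset.mem_insert_of_mem hj') hij)
        (fun j hj => h j (Finset.mem_insert_of_mem hj)))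

end NPRaux

/-- Let `N = p₁^{n₁} ⋯ p_k^{n_k}` for distinct primes `p_i`. Then `E` is `N`-PR iff for
every `i` the quotient map `π_{p_i^{n_i}}` is injective on `E` and `π_{p_i^{n_i}}(E)` is
`p_i`-PR. -/
theorem nPR_iff_forall_prime {Γ : Type*} [CommGroup Γ] (k : ℕ) (hk : 0 < k)
    (p n : Fin k → ℕ) (hp : ∀ i, (p i).Prime) (hpinj : Function.Injective p)
    (hn : ∀ i, 1 ≤ n i) (N : ℕ) (hN : N = ∏ i, p i ^ n i) (E : Set Γ) :
    IsNPR N E ↔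
      ∀ i : Fin k,
        Set.InjOn (QuotientGroup.mk'
          (notDvdOrderSubgroup Γ (p i) (hp i) (n i) (Nat.one_le_iff_ne_zero.mp (hn i)))) E ∧
        IsNPR (p i)
          ((QuotientGroup.mk'
            (notDvdOrderSubgroup Γ (p i) (hp i) (n i)
              (Nat.one_le_iff_ne_zero.mp (hn i)))) '' E) := by
  constructor
  · intro hE i
    have hqm : p i ^ n i ∣ N := hN ▸ Finset.dvd_prod_of_mem
      (fun i => p i ^ n i) (Finset.mem_univ i)
    exact ⟨NPRaux.injOn_of_isNPR (hp i) (Nat.one_le_iff_ne_zero.mp (hn i)) hqm hE,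
      NPRaux.image_isNPR_of_isNPR (hp i) (Nat.one_le_iff_ne_zero.mp (hn i)) hqm hE⟩
  · intro h
    rw [hN]
    refine NPRaux.isNPR_prod Finset.univ (fun i => p i ^ n i) ?_ ?_
    · intro i _ j _ hij
      exact ((Nat.coprime_primes (hp i) (hp j)).mpr (fun hc => hij (hpinj hc))).pow _ _
    · intro i _
      exact NPRaux.isNPR_pow_of_image (hp i) (Nat.one_le_iff_ne_zero.mp (hn i))
        (h i).1 (h i).2
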